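/- arXiv:2301.11048 — 2 statements merged into one kernel-verified Lean document; each statement's English description precedes it below -/
import Mathlib

section
/- In a finite digraph G, if the poset of paths in G under the subpath order contains an infinite antichain (i.e., is not wqo), then for any family of objects mapped surjectively-compatibly onto these paths the corresponding family is an antichain. Concretely: if π_1, π_2, ... are pairwise subpath-incomparable paths in the factor graph Γ_B, and σ_i are equivalence relations with window sequence Π(σ_i) = π_i, then the σ_i are pairwise incomparable under consecutive embedding; hence Av(B) is not wqo. -/
/-- A finite equivalence relation on a linearly ordered set `{0,...,n-1}`. -/
def EqRel : Type := (n : ℕ) × Setoid (Fin n)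

/-- The consecutive embedding order. -/
def ConsLE (a b : EqRel) : Prop :=
  ∃ k, k + a.1 ≤ b.1 ∧
    ∀ (x y : Fin a.1) (hx : k + x.1 < b.1) (hy : k + y.1 < b.1),
      (a.2.r x y ↔ b.2.r ⟨k + x.1, hx⟩ ⟨k + y.1, hy⟩)

/-- The avoidance set of `B` under the consecutive embedding order. -/
def Av (B : Set EqRel) : Set EqRel := {τ | ∀ β ∈ B, ¬ ConsLE β τ}

/-- Length-`b` window of `ρ` starting at position `i`. -/
def window {n : ℕ} (ρ : Setoid (Fin n)) (b i : ℕ) (h : i + b ≤ n) : Setoid (Fin b) where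
  r x y := ρ.r ⟨i + x.1, by have := x.isLt; omega⟩ ⟨i + y.1, by have := y.isLt; omega⟩
  iseqv :=
    { refl := fun x => ρ.iseqv.refl _
      symm := fun h => ρ.iseqv.symm h
      trans := fun h1 h2 => ρ.iseqv.trans h1 h2 }

/-- The window sequence `Π(ρ)` of all length-`b` windows of `ρ`. -/
def windows {n : ℕ} (ρ : Setoid (Fin n)) (b : ℕ) (h : b ≤ n) : List (Setoid (Fin b)) :=
  List.ofFn fun i : Fin (n - b + 1) => window ρ b i.1 (by have := i.isLt; omega)

/-!
An embedding of `a` into `c` at offset `k` identifies the `i`-th length-`b` window of `a` with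
the `(k + i)`-th window of `c`, so `Π(a)` is a factor of `Π(c)`. Contrapositively,
pairwise factor-incomparable window paths force pairwise incomparable relations, and such an
infinite antichain in `Av B` has no increasing pair.
-/

theorem window_eq_window_add {a c : EqRel} {k : ℕ} (hk : k + a.1 ≤ c.1)
    (hw : ∀ (x y : Fin a.1) (hx : k + x.1 < c.1) (hy : k + y.1 < c.1),
      (a.2.r x y ↔ c.2.r ⟨k + x.1, hx⟩ ⟨k + y.1, hy⟩))
    (b i : ℕ) (hi : i + b ≤ a.1) :
    window a.2 b i hi = window c.2 b (k + i) (by omega) := by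
  refine Setoid.ext fun x y => ?_
  have hx : i + x.1 < a.1 := by omega
  have hy : i + y.1 < a.1 := by omega
  refine (hw ⟨i + x.1, hx⟩ ⟨i + y.1, hy⟩ (by omega) (by omega)).trans ?_
  change _ ↔ c.2.r ⟨k + i + x.1, _⟩ ⟨k + i + y.1, _⟩
  simp only [Nat.add_assoc]

theorem ConsLE.windows_infix {a c : EqRel} (h : ConsLE a c) (b : ℕ) (ha : b ≤ a.1)
    (hc : b ≤ c.1) : windows a.2 b ha <:+: windows c.2 b hc := by
  obtain ⟨k, hk, hw⟩ := h
  have hfactor : windows a.2 b ha = ((windows c.2 b hc).drop k).take (a.1 - b + 1) := by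
    refine List.ext_getElem ?_ fun i hi _ => ?_
    · simp only [windows, List.length_take, List.length_drop, List.length_ofFn]
      omega
    simp only [windows, List.length_ofFn] at hi
    simp only [windows, List.getElem_take, List.getElem_drop, List.getElem_ofFn]
    exact window_eq_window_add hk hw b i (by omega)
  rw [hfactor]
  exact (List.take_prefix _ _).isInfix.trans (List.drop_suffix _ _).isInfix

theorem antichain_of_window_antichain_general (b : ℕ) (B : Set EqRel)
    (σ : ℕ → EqRel) (hlen : ∀ i, b ≤ (σ i).1) (hmem : ∀ i, σ i ∈ Av B)
    (hanti : ∀ i j, i ≠ j →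
      ¬ (windows (σ i).2 b (hlen i) <:+: windows (σ j).2 b (hlen j))) :
    (∀ i j, i ≠ j → ¬ ConsLE (σ i) (σ j)) ∧
      ¬ ∀ f : ℕ → EqRel, (∀ n, f n ∈ Av B) → ∃ i j, i < j ∧ ConsLE (f i) (f j) := by
  have incomparable : ∀ i j, i ≠ j → ¬ ConsLE (σ i) (σ j) := fun i j hij hle =>
    hanti i j hij (hle.windows_infix b (hlen i) (hlen j))
  refine ⟨incomparable, fun hwqo => ?_⟩
  obtain ⟨i, j, hij, hle⟩ := hwqo σ hmem
  exact incomparable i j hij.ne hle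

/-- If `σ₁, σ₂, ...` are members of `Av B` of length at least `b` whose window paths
`Π(σ_i)` are pairwise subpath-incomparable, then the `σ_i` are pairwise incomparable
under consecutive embedding; hence `Av B` is not well quasi-ordered. -/
theorem antichain_of_window_antichain (b : ℕ) (hb : 0 < b) (B : Set EqRel)
    (σ : ℕ → EqRel) (hlen : ∀ i, b ≤ (σ i).1) (hmem : ∀ i, σ i ∈ Av B)
    (hanti : ∀ i j, i ≠ j →
      ¬ (windows (σ i).2 b (hlen i) <:+: windows (σ j).2 b (hlen j))) :
    (∀ i j, i ≠ j → ¬ ConsLE (σ i) (σ j)) ∧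
      ¬ ∀ f : ℕ → EqRel, (∀ n, f n ∈ Av B) → ∃ i j, i < j ∧ ConsLE (f i) (f j) :=
  antichain_of_window_antichain_general b B σ hlen hmem hanti
end

section
/- Let B be a finite set of equivalence relations on linearly ordered sets, each of length at most b, and let C = Av(B) under the consecutive embedding order. If for every two elements σ, ρ of C of length ≥ b there is a common extension in C (i.e., C restricted to lengths ≥ b has the JEP), and if every element of C of length < b consecutively embeds into some element of C of length exactly b, then C is atomic. -/
/-! Every member of `C` lies below one of length `≥ b`, and any two of those have a common
extension in `C`; transitivity of the consecutive embedding order does the rest. -/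

theorem consLE_refl (a : EqRel) : ConsLE a a :=
  ⟨0, by omega, fun x y _ _ => by simp only [Nat.zero_add]⟩

theorem consLE_trans {a b c : EqRel} (hab : ConsLE a b) (hbc : ConsLE b c) : ConsLE a c := by
  obtain ⟨k, hk, hab⟩ := hab
  obtain ⟨l, hl, hbc⟩ := hbc
  refine ⟨l + k, by omega, fun x y hx hy => ?_⟩
  have hxb : k + x.1 < b.1 := by omega
  have hyb : k + y.1 < b.1 := by omega
  rw [hab x y hxb hyb, hbc ⟨k + x.1, hxb⟩ ⟨k + y.1, hyb⟩ (by omega) (by omega)]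
  simp only [add_assoc]

instance : IsTrans EqRel ConsLE := ⟨fun _ _ _ => consLE_trans⟩

theorem exists_common_upper_of_cofinal {α : Type*} {r : α → α → Prop} [IsTrans α r]
    {C D : Set α} (hcof : ∀ σ ∈ C, ∃ τ ∈ D, r σ τ)
    (hjoint : ∀ σ ∈ D, ∀ ρ ∈ D, ∃ θ ∈ C, r σ θ ∧ r ρ θ) :
    ∀ σ ∈ C, ∀ ρ ∈ C, ∃ θ ∈ C, r σ θ ∧ r ρ θ := by
  intro σ hσ ρ hρ
  obtain ⟨σ', hσ', hσσ'⟩ := hcof σ hσ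
  obtain ⟨ρ', hρ', hρρ'⟩ := hcof ρ hρ
  obtain ⟨θ, hθ, hσ'θ, hρ'θ⟩ := hjoint σ' hσ' ρ' hρ'
  exact ⟨θ, hθ, _root_.trans hσσ' hσ'θ, _root_.trans hρρ' hρ'θ⟩

theorem exists_consLE_of_length_ge {C : Set EqRel} {b : ℕ}
    (hshort : ∀ σ ∈ C, σ.1 < b → ∃ ρ ∈ C, ρ.1 = b ∧ ConsLE σ ρ) :
    ∀ σ ∈ C, ∃ τ ∈ {τ ∈ C | b ≤ τ.1}, ConsLE σ τ := by
  intro σ hσ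
  by_cases hlen : b ≤ σ.1
  · exact ⟨σ, ⟨hσ, hlen⟩, consLE_refl σ⟩
  · obtain ⟨ρ, hρ, hρlen, hσρ⟩ := hshort σ hσ (by omega)
    exact ⟨ρ, ⟨hρ, hρlen.ge⟩, hσρ⟩

theorem av_atomic_of_jep_on_long_general (b : ℕ) (B : Set EqRel)
    (h₁ : ∀ σ ∈ Av B, ∀ ρ ∈ Av B, b ≤ σ.1 → b ≤ ρ.1 →
      ∃ θ ∈ Av B, ConsLE σ θ ∧ ConsLE ρ θ)
    (h₂ : ∀ σ ∈ Av B, σ.1 < b → ∃ ρ ∈ Av B, ρ.1 = b ∧ ConsLE σ ρ) :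
    ∀ σ ∈ Av B, ∀ ρ ∈ Av B, ∃ θ ∈ Av B, ConsLE σ θ ∧ ConsLE ρ θ :=
  exists_common_upper_of_cofinal (exists_consLE_of_length_ge h₂)
    fun σ hσ ρ hρ => h₁ σ hσ.1 ρ hρ.1 hσ.2 hρ.2

/-- Let `B` be a finite set of relations of length at most `b` and `C = Av(B)`.
If `C` restricted to lengths `≥ b` has the joint embedding property, and every
member of `C` of length `< b` consecutively embeds in a member of `C` of length
exactly `b`, then `C` is atomic. -/
theorem av_atomic_of_jep_on_long (b : ℕ) (B : Set EqRel) (hBfin : B.Finite)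
    (hBlen : ∀ β ∈ B, β.1 ≤ b)
    (h₁ : ∀ σ ∈ Av B, ∀ ρ ∈ Av B, b ≤ σ.1 → b ≤ ρ.1 →
      ∃ θ ∈ Av B, ConsLE σ θ ∧ ConsLE ρ θ)
    (h₂ : ∀ σ ∈ Av B, σ.1 < b → ∃ ρ ∈ Av B, ρ.1 = b ∧ ConsLE σ ρ) :
    ∀ σ ∈ Av B, ∀ ρ ∈ Av B, ∃ θ ∈ Av B, ConsLE σ θ ∧ ConsLE ρ θ :=
  av_atomic_of_jep_on_long_general b B h₁ h₂
end
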